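/- arXiv:1207.3749 — 2 statements merged into one kernel-verified Lean document; each statement's English description precedes it below -/
import Mathlib

section
/- Let P₁, P₂ be real numbers with P₁² + P₂² > 1 and P₂ ≠ 0, set s = √(P₁² + P₂² − 1), w(L) = 1 + P₁·sin L + P₂·cos L, and u(L) = (P₁ − (P₂ − 1)·tan(L/2))/s. Let L be a real number with cos(L/2) ≠ 0 and |u(L)| < 1. Then the function F(L) = (2/s³)·artanh(u(L)) + (P₁ + (P₁² + P₂²)·sin L)/(P₂·(P₁² + P₂² − 1)·w(L)) is differentiable at L with derivative F′(L) = 1/w(L)². -/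
/-!
With `t = tan (L / 2)`, the Weierstrass substitution gives
`(P₂ - 1) (1 + t²) w = s² - (P₁ - (P₂ - 1) t)² = s² (1 - u²)`, which is positive when `|u| < 1`.
Hence `w ≠ 0`, and the chain rule gives the artanh term the derivative `-1 / (s² w)`. The quotient
rule together with `sin² + cos² = 1` gives the rational term the derivative `1 / w² + 1 / (s² w)`.
-/

open Real

noncomputable def Real.artanh' (x : ℝ) : ℝ := (1 / 2) * Real.log ((1 + x) / (1 - x))

namespace Real

theorem hasDerivAt_artanh' {x : ℝ} (hx : |x| < 1) : HasDerivAt artanh' (1 - x ^ 2)⁻¹ x := by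
  obtain ⟨hx₁, hx₂⟩ := abs_lt.mp hx
  have hplus : 0 < 1 + x := by linarith
  have hminus : 0 < 1 - x := by linarith
  have hquot := ((hasDerivAt_id' x).const_add 1).div ((hasDerivAt_id' x).const_sub 1) hminus.ne'
  refine ((hquot.log (div_pos hplus hminus).ne').const_mul (1 / 2)).congr_deriv ?_
  have : 1 - x ^ 2 = (1 + x) * (1 - x) := by ring
  rw [Pi.div_apply, this]
  field_simp
  ring

theorem hasDerivAt_tan_half {x : ℝ} (hx : cos (x / 2) ≠ 0) :
    HasDerivAt (fun y => tan (y / 2)) ((1 + tan (x / 2) ^ 2) / 2) x := by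
  refine ((hasDerivAt_tan hx).comp x ((hasDerivAt_id' x).div_const 2)).congr_deriv ?_
  rw [one_div, ← inv_one_add_tan_sq hx, inv_inv]
  ring

theorem cos_eq_one_sub_tan_half_sq_div {x : ℝ} (hx : cos (x / 2) ≠ 0) :
    cos x = (1 - tan (x / 2) ^ 2) / (1 + tan (x / 2) ^ 2) := by
  refine cos_eq_two_mul_tan_half_div_one_sub_tan_half_sq x fun h => hx ?_
  have : cos x = 2 * cos (x / 2) ^ 2 - 1 := by rw [← cos_two_mul, mul_div_cancel₀ x two_ne_zero]
  exact pow_eq_zero_iff two_ne_zero |>.mp (by linarith)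

end Real

namespace I12

variable (P₁ P₂ : ℝ)

noncomputable def w (x : ℝ) : ℝ := 1 + P₁ * sin x + P₂ * cos x

theorem hasDerivAt_w (x : ℝ) : HasDerivAt (w P₁ P₂) (P₁ * cos x - P₂ * sin x) x := by
  refine ((((hasDerivAt_sin x).const_mul P₁).const_add 1).add
    ((hasDerivAt_cos x).const_mul P₂)).congr_deriv ?_
  ring

theorem sub_one_mul_one_add_tan_half_sq_mul_w {x : ℝ} (hx : cos (x / 2) ≠ 0) :
    (P₂ - 1) * (1 + tan (x / 2) ^ 2) * w P₁ P₂ x =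
      (P₁ ^ 2 + P₂ ^ 2 - 1) - (P₁ - (P₂ - 1) * tan (x / 2)) ^ 2 := by
  have : 1 + tan (x / 2) ^ 2 ≠ 0 := by positivity
  rw [w, sin_eq_two_mul_tan_half_div_one_add_tan_half_sq, cos_eq_one_sub_tan_half_sq_div hx]
  field_simp
  ring

variable {P₁ P₂}

theorem sub_one_mul_one_add_tan_half_sq_mul_w_pos {s x : ℝ} (hs : s ^ 2 = P₁ ^ 2 + P₂ ^ 2 - 1)
    (hs₀ : s ≠ 0) (hx : cos (x / 2) ≠ 0) (hu : |(P₁ - (P₂ - 1) * tan (x / 2)) / s| < 1) :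
    0 < (P₂ - 1) * (1 + tan (x / 2) ^ 2) * w P₁ P₂ x := by
  rw [abs_div, div_lt_one (abs_pos.mpr hs₀), ← sq_lt_sq] at hu
  rw [sub_one_mul_one_add_tan_half_sq_mul_w P₁ P₂ hx, ← hs]
  linarith

theorem hasDerivAt_artanh_term {s x : ℝ} (hs : s ^ 2 = P₁ ^ 2 + P₂ ^ 2 - 1) (hs₀ : s ≠ 0)
    (hx : cos (x / 2) ≠ 0) (hu : |(P₁ - (P₂ - 1) * tan (x / 2)) / s| < 1) :
    HasDerivAt (fun y => 2 / s ^ 3 * artanh' ((P₁ - (P₂ - 1) * tan (y / 2)) / s))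
      (-((P₁ ^ 2 + P₂ ^ 2 - 1) * w P₁ P₂ x)⁻¹) x := by
  have hu' := (((hasDerivAt_tan_half hx).const_mul (P₂ - 1)).const_sub P₁).div_const s
  refine (((hasDerivAt_artanh' hu).comp x hu').const_mul (2 / s ^ 3)).congr_deriv ?_
  have hpos := sub_one_mul_one_add_tan_half_sq_mul_w_pos hs hs₀ hx hu
  have hw := sub_one_mul_one_add_tan_half_sq_mul_w P₁ P₂ hx
  rw [← hs] at hw ⊢
  set t := tan (x / 2)
  have hfactor : (P₂ - 1) * (1 + t ^ 2) ≠ 0 := left_ne_zero_of_mul hpos.ne'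
  have hw₀ : w P₁ P₂ x ≠ 0 := right_ne_zero_of_mul hpos.ne'
  have hdiff : s ^ 2 - (P₁ - (P₂ - 1) * t) ^ 2 ≠ 0 := hw ▸ hpos.ne'
  field_simp
  linear_combination -hw

theorem hasDerivAt_rational_term {x : ℝ} (hP₂ : P₂ ≠ 0) (hq : P₁ ^ 2 + P₂ ^ 2 - 1 ≠ 0)
    (hw : w P₁ P₂ x ≠ 0) :
    HasDerivAt
      (fun y => (P₁ + (P₁ ^ 2 + P₂ ^ 2) * sin y) / (P₂ * (P₁ ^ 2 + P₂ ^ 2 - 1) * w P₁ P₂ y))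
      ((w P₁ P₂ x ^ 2)⁻¹ + ((P₁ ^ 2 + P₂ ^ 2 - 1) * w P₁ P₂ x)⁻¹) x := by
  have hnum := ((hasDerivAt_sin x).const_mul (P₁ ^ 2 + P₂ ^ 2)).const_add P₁
  have hden := (hasDerivAt_w P₁ P₂ x).const_mul (P₂ * (P₁ ^ 2 + P₂ ^ 2 - 1))
  refine (hnum.div hden (by positivity)).congr_deriv ?_
  rw [w] at hw ⊢
  field_simp
  linear_combination P₂ * (P₁ ^ 2 + P₂ ^ 2) * sin_sq_add_cos_sq x

end I12

/-- Closed-form antiderivative of `I₁₂`: with `s = √(P₁² + P₂² - 1)`,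
`w(L) = 1 + P₁ sin L + P₂ cos L` and `u(L) = (P₁ - (P₂ - 1) tan(L/2))/s`, the
function `F(L) = (2/s³)·artanh(u(L)) + (P₁ + (P₁² + P₂²) sin L)/(P₂ (P₁² + P₂² - 1) w(L))`
has derivative `1 / w(L)²` at `L`. -/
theorem I12_antiderivative (P₁ P₂ L : ℝ) (h : 1 < P₁ ^ 2 + P₂ ^ 2) (hP₂ : P₂ ≠ 0)
    (hc : cos (L / 2) ≠ 0)
    (hu : |(P₁ - (P₂ - 1) * tan (L / 2)) / Real.sqrt (P₁ ^ 2 + P₂ ^ 2 - 1)| < 1) :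
    HasDerivAt
      (fun x : ℝ =>
        (2 / Real.sqrt (P₁ ^ 2 + P₂ ^ 2 - 1) ^ 3) *
            Real.artanh' ((P₁ - (P₂ - 1) * tan (x / 2)) / Real.sqrt (P₁ ^ 2 + P₂ ^ 2 - 1)) +
          (P₁ + (P₁ ^ 2 + P₂ ^ 2) * sin x) /
            (P₂ * (P₁ ^ 2 + P₂ ^ 2 - 1) * (1 + P₁ * sin x + P₂ * cos x)))
      (1 / (1 + P₁ * sin L + P₂ * cos L) ^ 2) L := by
  have hq : 0 < P₁ ^ 2 + P₂ ^ 2 - 1 := by linarith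
  have hs : √(P₁ ^ 2 + P₂ ^ 2 - 1) ^ 2 = P₁ ^ 2 + P₂ ^ 2 - 1 := sq_sqrt hq.le
  have hs₀ : √(P₁ ^ 2 + P₂ ^ 2 - 1) ≠ 0 := (sqrt_pos.mpr hq).ne'
  have hw : I12.w P₁ P₂ L ≠ 0 :=
    right_ne_zero_of_mul (I12.sub_one_mul_one_add_tan_half_sq_mul_w_pos hs hs₀ hc hu).ne'
  exact ((I12.hasDerivAt_artanh_term hs hs₀ hc hu).add
    (I12.hasDerivAt_rational_term hP₂ hq.ne' hw)).congr_deriv (by rw [I12.w]; ring)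
end

section
/- Let P₁, P₂ be real numbers with P₁² + P₂² > 1, set s = √(P₁² + P₂² − 1), w(L) = 1 + P₁·sin L + P₂·cos L, and u(L) = (P₁ − (P₂ − 1)·tan(L/2))/s. Let L be a real number with cos(L/2) ≠ 0 and |u(L)| < 1. Then the function F(L) = −(2·P₂/s³)·artanh(u(L)) − (P₁ + sin L)/((P₁² + P₂² − 1)·w(L)) is differentiable at L with derivative F′(L) = cos L / w(L)². -/
open Real

/-!
With `t = tan (L / 2)` and `u = (P₁ - (P₂ - 1) t) / s`, the half-angle formulas give
`cos² (L / 2) · (s² - (P₁ - (P₂ - 1) t)²) = (P₂ - 1) · w(L)`.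
Since `u' = -(P₂ - 1) / (2 s cos² (L / 2))`, this identity collapses
`u' / (1 - u²)` to `-s / (2 w)`, so the `artanh` term contributes `P₂ / (s² w)`; it also shows
that `|u| < 1` forces `w(L) ≠ 0`. Adding the quotient-rule derivative of the second term leaves
`cos L / w²` after using `sin² L + cos² L = 1`.
-/

theorem Real.hasDerivAt_artanh'_s12 {x : ℝ} (hx : |x| < 1) :
    HasDerivAt artanh' (1 / (1 - x ^ 2)) x := by
  obtain ⟨hx₁, hx₂⟩ := abs_lt.mp hx
  have hq : HasDerivAt (fun y : ℝ => (1 + y) / (1 - y)) (2 / (1 - x) ^ 2) x := by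
    refine (((hasDerivAt_id x).const_add 1).div ((hasDerivAt_id x).const_sub 1)
      (by linarith : 1 - x ≠ 0)).congr_deriv ?_
    simp only [id]
    ring
  refine ((hq.log (div_pos (by linarith) (by linarith)).ne').const_mul (1 / 2 : ℝ)).congr_deriv ?_
  have : 1 - x ≠ 0 := by linarith
  have : 1 + x ≠ 0 := by linarith
  have : 1 - x ^ 2 ≠ 0 := by nlinarith
  field_simp
  ring

theorem cos_sq_half_mul_sub_sq_tan_half (P₁ P₂ L : ℝ) (hc : cos (L / 2) ≠ 0) :
    cos (L / 2) ^ 2 * (P₁ ^ 2 + P₂ ^ 2 - 1 - (P₁ - (P₂ - 1) * tan (L / 2)) ^ 2) =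
      (P₂ - 1) * (1 + P₁ * sin L + P₂ * cos L) := by
  obtain ⟨θ, rfl⟩ : ∃ θ, L = 2 * θ := ⟨L / 2, by ring⟩
  rw [mul_div_cancel_left₀ θ two_ne_zero] at hc ⊢
  rw [tan_eq_sin_div_cos, sin_two_mul, cos_two_mul']
  field_simp
  linear_combination (P₂ - 1) * sin_sq_add_cos_sq θ

section TanHalfSubstitution

variable {P₁ P₂ s L : ℝ}

theorem sub_one_mul_one_add_mul_sin_add_mul_cos_pos (hs : s ^ 2 = P₁ ^ 2 + P₂ ^ 2 - 1)
    (hs0 : s ≠ 0) (hc : cos (L / 2) ≠ 0) (hu : |(P₁ - (P₂ - 1) * tan (L / 2)) / s| < 1) :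
    0 < (P₂ - 1) * (1 + P₁ * sin L + P₂ * cos L) := by
  have hlt : (P₁ - (P₂ - 1) * tan (L / 2)) ^ 2 < s ^ 2 := by
    rw [abs_div, div_lt_one (abs_pos.mpr hs0)] at hu
    exact sq_lt_sq.mpr hu
  rw [← cos_sq_half_mul_sub_sq_tan_half P₁ P₂ L hc, ← hs]
  exact mul_pos (by positivity) (sub_pos.mpr hlt)

theorem hasDerivAt_artanh'_tan_half (hs : s ^ 2 = P₁ ^ 2 + P₂ ^ 2 - 1) (hs0 : s ≠ 0)
    (hc : cos (L / 2) ≠ 0) (hu : |(P₁ - (P₂ - 1) * tan (L / 2)) / s| < 1) :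
    HasDerivAt (fun x => artanh' ((P₁ - (P₂ - 1) * tan (x / 2)) / s))
      (-s / (2 * (1 + P₁ * sin L + P₂ * cos L))) L := by
  have htan : HasDerivAt (fun x => tan (x / 2)) (1 / cos (L / 2) ^ 2 * (1 / 2)) L :=
    (hasDerivAt_tan hc).comp (h := fun x => x / 2) L ((hasDerivAt_id L).div_const 2)
  refine ((hasDerivAt_artanh'_s12 hu).comp L
    (((htan.const_mul (P₂ - 1)).const_sub P₁).div_const s)).congr_deriv ?_
  have hpos := sub_one_mul_one_add_mul_sin_add_mul_cos_pos hs hs0 hc hu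
  have key := cos_sq_half_mul_sub_sq_tan_half P₁ P₂ L hc
  rw [← hs] at key
  have hw : 1 + P₁ * sin L + P₂ * cos L ≠ 0 := right_ne_zero_of_mul hpos.ne'
  have hdisc : s ^ 2 - (P₁ - (P₂ - 1) * tan (L / 2)) ^ 2 ≠ 0 := by
    intro h; rw [h, mul_zero] at key; exact hpos.ne key
  field_simp
  linear_combination key

end TanHalfSubstitution

theorem hasDerivAt_one_add_mul_sin_add_mul_cos (P₁ P₂ L : ℝ) :
    HasDerivAt (fun x => 1 + P₁ * sin x + P₂ * cos x) (P₁ * cos L - P₂ * sin L) L :=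
  ((((hasDerivAt_sin L).const_mul P₁).const_add 1).add
    ((hasDerivAt_cos L).const_mul P₂)).congr_deriv (by ring)

/-- Closed-form antiderivative of `I_c2`: with `s = √(P₁² + P₂² - 1)`,
`w(L) = 1 + P₁ sin L + P₂ cos L` and `u(L) = (P₁ - (P₂ - 1) tan(L/2))/s`, the
function `F(L) = -(2P₂/s³)·artanh(u(L)) - (P₁ + sin L)/((P₁² + P₂² - 1) w(L))`
has derivative `cos L / w(L)²` at `L`. -/
theorem Ic2_antiderivative (P₁ P₂ L : ℝ) (h : 1 < P₁ ^ 2 + P₂ ^ 2)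
    (hc : cos (L / 2) ≠ 0)
    (hu : |(P₁ - (P₂ - 1) * tan (L / 2)) / Real.sqrt (P₁ ^ 2 + P₂ ^ 2 - 1)| < 1) :
    HasDerivAt
      (fun x : ℝ =>
        -(2 * P₂ / Real.sqrt (P₁ ^ 2 + P₂ ^ 2 - 1) ^ 3) *
            Real.artanh' ((P₁ - (P₂ - 1) * tan (x / 2)) / Real.sqrt (P₁ ^ 2 + P₂ ^ 2 - 1)) -
          (P₁ + sin x) / ((P₁ ^ 2 + P₂ ^ 2 - 1) * (1 + P₁ * sin x + P₂ * cos x)))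
      (cos L / (1 + P₁ * sin L + P₂ * cos L) ^ 2) L := by
  have hq : 0 < P₁ ^ 2 + P₂ ^ 2 - 1 := by linarith
  have hs := sq_sqrt hq.le
  have hs0 := (sqrt_pos.mpr hq).ne'
  set s := √(P₁ ^ 2 + P₂ ^ 2 - 1)
  have hw : 1 + P₁ * sin L + P₂ * cos L ≠ 0 :=
    right_ne_zero_of_mul (sub_one_mul_one_add_mul_sin_add_mul_cos_pos hs hs0 hc hu).ne'
  have hA := (hasDerivAt_artanh'_tan_half hs hs0 hc hu).const_mul (-(2 * P₂ / s ^ 3))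
  have hB := ((hasDerivAt_sin L).const_add P₁).div
    ((hasDerivAt_one_add_mul_sin_add_mul_cos P₁ P₂ L).const_mul (P₁ ^ 2 + P₂ ^ 2 - 1))
    (mul_ne_zero hq.ne' hw)
  refine (hA.sub hB).congr_deriv ?_
  field_simp
  rw [hs]
  linear_combination -(P₂ * (P₁ ^ 2 + P₂ ^ 2 - 1)) * sin_sq_add_cos_sq L
end
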